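/- If (x_n) and (y_n) are nearly computably Cauchy sequences in a normed vector space, then (x_n + y_n)_n is nearly computably Cauchy; moreover, for any real λ, (λ·x_n)_n is nearly computably Cauchy. Thus the nearly computably Cauchy sequences form a sub vector space of the space of all sequences. -/

import Mathlib

open Filter Topology

/-- `g` is a modulus of convergence of `x` to `y`. -/
def ConvModulus {X : Type*} [MetricSpace X] (x : ℕ → X) (y : X) (g : ℕ → ℕ) : Prop :=
  ∀ n m : ℕ, g n ≤ m → dist (x m) y ≤ (2 : ℝ)⁻¹ ^ n

/-- `g` is a Cauchy modulus of `x`. -/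
def CauchyModulus {X : Type*} [MetricSpace X] (x : ℕ → X) (g : ℕ → ℕ) : Prop :=
  ∀ n l m : ℕ, g n ≤ l → g n ≤ m → dist (x l) (x m) ≤ (2 : ℝ)⁻¹ ^ n

/-- `x` is computably Cauchy. -/
def ComputablyCauchy {X : Type*} [MetricSpace X] (x : ℕ → X) : Prop :=
  ∃ g : ℕ → ℕ, Computable g ∧ CauchyModulus x g

/-- A real sequence converges computably to `0`. -/
def CCto0 (y : ℕ → ℝ) : Prop :=
  ∃ g : ℕ → ℕ, Computable g ∧ ∀ n m : ℕ, g n ≤ m → |y m| ≤ (2 : ℝ)⁻¹ ^ n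

/-- `x` is nearly computably Cauchy. -/
def NCC {X : Type*} [MetricSpace X] (x : ℕ → X) : Prop :=
  ∀ r : ℕ → ℕ, Computable r → StrictMono r →
    CCto0 (fun n => dist (x (r (n + 1))) (x (r n)))

theorem CCto0.of_abs_le {u z : ℕ → ℝ} (hu : CCto0 u) (h : ∀ m, |z m| ≤ |u m|) : CCto0 z := by
  obtain ⟨g, hg, hgu⟩ := hu
  exact ⟨g, hg, fun n m hm => (h m).trans (hgu n m hm)⟩

theorem CCto0.add {u v : ℕ → ℝ} (hu : CCto0 u) (hv : CCto0 v) : CCto0 (u + v) := by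
  obtain ⟨g, hg, hgu⟩ := hu
  obtain ⟨h, hh, hhv⟩ := hv
  refine ⟨fun n => max (g (n + 1)) (h (n + 1)),
    Primrec.nat_max.to_comp.comp (hg.comp Primrec.succ.to_comp) (hh.comp Primrec.succ.to_comp),
    fun n m hm => ?_⟩
  rw [max_le_iff] at hm
  calc |u m + v m| ≤ |u m| + |v m| := abs_add_le _ _
    _ ≤ (2 : ℝ)⁻¹ ^ (n + 1) + (2 : ℝ)⁻¹ ^ (n + 1) :=
        add_le_add (hgu (n + 1) m hm.1) (hhv (n + 1) m hm.2)
    _ = (2 : ℝ)⁻¹ ^ n := by ring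

theorem CCto0.const_mul (c : ℝ) {u : ℕ → ℝ} (hu : CCto0 u) : CCto0 (fun m => c * u m) := by
  obtain ⟨g, hg, hgu⟩ := hu
  obtain ⟨k, hk⟩ := pow_unbounded_of_one_lt |c| one_lt_two
  refine ⟨fun n => g (n + k), hg.comp (Primrec.nat_add.comp .id (.const k)).to_comp,
    fun n m hm => ?_⟩
  calc |c * u m| = |c| * |u m| := abs_mul _ _
    _ ≤ 2 ^ k * (2 : ℝ)⁻¹ ^ (n + k) := by gcongr; exact hgu (n + k) m hm
    _ = (2 : ℝ)⁻¹ ^ n := by rw [pow_add, inv_pow, inv_pow]; field_simp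

theorem NCC.add {X : Type*} [NormedAddCommGroup X] {x y : ℕ → X} (hx : NCC x) (hy : NCC y) :
    NCC (x + y) := fun r hr hmono =>
  ((hx r hr hmono).add (hy r hr hmono)).of_abs_le fun m => by
    simp only [Pi.add_apply, abs_dist]
    exact (dist_add_add_le _ _ _ _).trans (le_abs_self _)

theorem NCC.const_smul {𝕜 X : Type*} [NormedField 𝕜] [NormedAddCommGroup X] [NormedSpace 𝕜 X]
    (c : 𝕜) {x : ℕ → X} (hx : NCC x) : NCC (c • x) := fun r hr hmono =>
  ((hx r hr hmono).const_mul ‖c‖).of_abs_le fun m => by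
    simp only [Pi.smul_apply, abs_dist, dist_smul₀, abs_mul, abs_norm, le_refl]

theorem stmt13 {X : Type*} [NormedAddCommGroup X] [NormedSpace ℝ X] (x y : ℕ → X)
    (hx : NCC x) (hy : NCC y) :
    NCC (fun n => x n + y n) ∧ ∀ c : ℝ, NCC (fun n => c • x n) :=
  ⟨hx.add hy, fun c => hx.const_smul c⟩
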